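/- Let E^{(i)} ∈ F_{q^m}^{h_i × N_i} have F_q-rank t_i for i = 1, ..., ℓ, let R^{(i)} = C^{(i)} + E^{(i)} where C^{(i)} is the i-th block of an FLRS codeword for a message polynomial f of degree < k, and let Q be a nonzero solution of the interpolation problem with parameter s and degree bound D. If D ≤ Σ_{i=1}^{ℓ} (N_i − t_i)(h_i − s + 1), then the univariate skew polynomial P(x) = Q_0(x) + Q_1(x)f(x) + Q_2(x)f(x)γ + ... + Q_s(x)f(x)γ^{s−1} is the zero polynomial. -/

import Mathlib

/-!
In block `i`, every `F_q`-linear relation `w` among the columns of `E⁽ⁱ⁾` annihilates the error,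
so for each window shift `l` the element `Σ_j w_j γ^(j h_i + l)` is a root of `P` with respect
to `a_i`. Since `γ` generates `F`, the powers `γ^0, …, γ^(h_i N_i - 1)` are `F_q`-independent, and
so are these `(N_i - t_i)(h_i - s + 1)` roots.

On the other hand, a nonzero skew polynomial has at most `deg P` independent roots in total over
distinct conjugacy classes: a root `b ≠ 0` for `a` splits off a right factor `X - σ(b) a b⁻¹`,
whose roots for `a` form the line `F_q b` and which has no nonzero root for a parameter
not conjugate to `a`. Together with `deg P < D` this forces `P = 0`.
-/

/-- Iterated generalized operator `D_a^r(b)` for zero derivation: `D_a(b) = σ(b)·a`. -/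
def Dit {F : Type*} [Field F] (σ : F ≃+* F) (a b : F) : ℕ → F
  | 0 => b
  | r + 1 => σ (Dit σ a b r) * a

/-- Generalized operator evaluation of a skew polynomial at `b` w.r.t. parameter `a`. -/
noncomputable def opev {F : Type*} [Field F] (σ : F ≃+* F) (f : Polynomial F)
    (a b : F) : F :=
  ∑ r ∈ f.support, f.coeff r * Dit σ a b r

/-- The fixed subfield `F_q` of the automorphism `σ`. -/
def fixedSubfield {F : Type*} [Field F] (σ : F ≃+* F) : Subfield F where
  carrier := {x | σ x = x}
  mul_mem' := by
    intro a b (ha : σ a = a) (hb : σ b = b)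
    show σ (a * b) = a * b
    rw [map_mul, ha, hb]
  one_mem' := by show σ 1 = 1; simp
  add_mem' := by
    intro a b (ha : σ a = a) (hb : σ b = b)
    show σ (a + b) = a + b
    rw [map_add, ha, hb]
  zero_mem' := by show σ 0 = 0; simp
  neg_mem' := by
    intro a (ha : σ a = a)
    show σ (-a) = -a
    rw [map_neg, ha]
  inv_mem' := by
    intro a (ha : σ a = a)
    show σ a⁻¹ = a⁻¹
    rw [map_inv₀, ha]

/-- The `F_q`-rank of a matrix over `F_{q^m}`: the dimension over the fixed subfield
of the span of its columns. -/
noncomputable def colRank {F : Type*} [Field F] (σ : F ≃+* F) {h N : ℕ}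
    (M : Matrix (Fin h) (Fin N) F) : ℕ :=
  Module.finrank (fixedSubfield σ)
    (Submodule.span (fixedSubfield σ) (Set.range fun j : Fin N => fun r : Fin h => M r j))

open Polynomial

section OperatorEvaluation

variable {F : Type*} [Field F] (σ : F ≃+* F)

lemma pow_apply_of_mem_fixedSubfield {c : F} (hc : c ∈ fixedSubfield σ) (n : ℕ) :
    (σ ^ n) c = c := by
  rw [RingAut.coe_pow]
  exact Function.iterate_fixed hc n

lemma Dit_add (a b c : F) (r : ℕ) : Dit σ a (b + c) r = Dit σ a b r + Dit σ a c r := by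
  induction r with
  | zero => rfl
  | succ r ih => simp only [Dit, ih, map_add, add_mul]

lemma Dit_mul (a b c : F) (r : ℕ) : Dit σ a (c * b) r = (σ ^ r) c * Dit σ a b r := by
  induction r with
  | zero => rfl
  | succ r ih => simp only [Dit, ih, map_mul, pow_succ', RingAut.mul_apply, mul_assoc]

lemma Dit_add_index (a b : F) (u v : ℕ) : Dit σ a b (u + v) = Dit σ a (Dit σ a b v) u := by
  induction u with
  | zero => rw [Nat.zero_add]; rfl
  | succ u ih => rw [Nat.succ_add]; simp only [Dit, ih]

lemma opev_eq_sum (p : F[X]) (a b : F) : opev σ p a b = p.sum fun n c => c * Dit σ a b n := rfl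

lemma opev_add (p q : F[X]) (a b : F) :
    opev σ (p + q) a b = opev σ p a b + opev σ q a b := by
  simp only [opev_eq_sum]
  exact sum_add_index p q _ (fun _ => zero_mul _) fun _ _ _ => add_mul _ _ _

lemma opev_sub (p q : F[X]) (a b : F) :
    opev σ (p - q) a b = opev σ p a b - opev σ q a b := by
  rw [eq_sub_iff_add_eq, ← opev_add, sub_add_cancel]

lemma opev_monomial (n : ℕ) (c a b : F) : opev σ (monomial n c) a b = c * Dit σ a b n := by
  rw [opev_eq_sum, sum_monomial_index c _ (zero_mul _)]

lemma opev_finset_sum {ι : Type*} (t : Finset ι) (p : ι → F[X]) (a b : F) :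
    opev σ (∑ i ∈ t, p i) a b = ∑ i ∈ t, opev σ (p i) a b :=
  map_sum (AddMonoidHom.mk' (fun p => opev σ p a b) fun p q => opev_add σ p q a b) p t

lemma opev_C (c a b : F) : opev σ (C c) a b = c * b := by
  rw [← monomial_zero_left, opev_monomial]; rfl

lemma opev_X_sub_C (α a b : F) : opev σ (X - C α) a b = σ b * a - α * b := by
  rw [opev_sub, ← monomial_one_one_eq_X, opev_monomial, opev_C, one_mul]; rfl

noncomputable def opevLinear (p : F[X]) (a : F) : F →ₗ[fixedSubfield σ] F where
  toFun b := opev σ p a b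
  map_add' b c := by simp only [opev, Dit_add, mul_add, Finset.sum_add_distrib]
  map_smul' c b := by
    simp only [opev, Subfield.smul_def, smul_eq_mul, Dit_mul,
      pow_apply_of_mem_fixedSubfield σ c.2, Finset.mul_sum, RingHom.id_apply]
    exact Finset.sum_congr rfl fun _ _ => mul_left_comm _ _ _

@[simp]
lemma opevLinear_apply (p : F[X]) (a b : F) : opevLinear σ p a b = opev σ p a b := rfl

end OperatorEvaluation

section SkewProduct

variable {F : Type*} [Field F] (σ : F ≃+* F)

/-- `F[X]` standing for the skew polynomial ring `F[X; σ]`, in which `X * c = σ c * X`. -/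
noncomputable def skewMul (p g : F[X]) : F[X] :=
  p.sum fun u c => C c * X ^ u * g.map (σ ^ u : F ≃+* F).toRingHom

lemma skewMul_zero_left (g : F[X]) : skewMul σ 0 g = 0 := sum_zero_index _

lemma skewMul_add_left (p q g : F[X]) :
    skewMul σ (p + q) g = skewMul σ p g + skewMul σ q g :=
  sum_add_index p q _ (fun _ => by rw [map_zero, zero_mul, zero_mul])
    fun _ _ _ => by rw [map_add, add_mul, add_mul]

lemma skewMul_monomial_left (u : ℕ) (c : F) (g : F[X]) :
    skewMul σ (monomial u c) g = C c * X ^ u * g.map (σ ^ u : F ≃+* F).toRingHom :=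
  sum_monomial_index c _ (by rw [map_zero, zero_mul, zero_mul])

lemma skewMul_add_right (p g g' : F[X]) :
    skewMul σ p (g + g') = skewMul σ p g + skewMul σ p g' := by
  simp only [skewMul, Polynomial.map_add, mul_add, sum_add]

lemma skewMul_sub_right (p g g' : F[X]) :
    skewMul σ p (g - g') = skewMul σ p g - skewMul σ p g' := by
  rw [eq_sub_iff_add_eq, ← skewMul_add_right, sub_add_cancel]

lemma skewMul_X_right (p : F[X]) : skewMul σ p X = p * X := by
  simp only [skewMul, Polynomial.map_X]
  conv_rhs => rw [← sum_C_mul_X_pow_eq p]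
  rw [Polynomial.sum, Polynomial.sum, Finset.sum_mul]

lemma coeff_skewMul (p g : F[X]) (n : ℕ) :
    (skewMul σ p g).coeff n =
      ∑ u ∈ Finset.range (n + 1), p.coeff u * (σ ^ u) (g.coeff (n - u)) := by
  induction p using Polynomial.induction_on' with
  | add p q hp hq =>
    simp only [skewMul_add_left, coeff_add, hp, hq, add_mul, Finset.sum_add_distrib]
  | monomial u c =>
    rw [skewMul_monomial_left, mul_assoc, coeff_C_mul, coeff_X_pow_mul']
    simp only [coeff_monomial, ite_mul, zero_mul, Finset.sum_ite_eq, Finset.mem_range,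
      Nat.lt_succ_iff]
    split_ifs <;> simp

lemma coeff_skewMul_C (g : F[X]) (c : F) (n : ℕ) :
    (skewMul σ g (C c)).coeff n = g.coeff n * (σ ^ n) c := by
  rw [coeff_skewMul, Finset.sum_eq_single n]
  · rw [Nat.sub_self, coeff_C_zero]
  · intro u hu hun
    rw [coeff_C, if_neg (by simp at hu; omega), map_zero, mul_zero]
  · simp

lemma natDegree_skewMul_le (p g : F[X]) :
    (skewMul σ p g).natDegree ≤ p.natDegree + g.natDegree := by
  refine natDegree_le_iff_coeff_eq_zero.mpr fun n hn => ?_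
  rw [coeff_skewMul]
  refine Finset.sum_eq_zero fun u _ => ?_
  by_cases hu : u ≤ p.natDegree
  · rw [coeff_eq_zero_of_natDegree_lt (p := g) (by omega), map_zero, mul_zero]
  · rw [coeff_eq_zero_of_natDegree_lt (by omega), zero_mul]

lemma natDegree_skewMul_X_sub_C {q : F[X]} (hq : q ≠ 0) (α : F) :
    (skewMul σ q (X - C α)).natDegree = q.natDegree + 1 := by
  have hC : (skewMul σ q (C α)).natDegree ≤ q.natDegree := by
    simpa using natDegree_skewMul_le σ q (C α)
  rw [skewMul_sub_right, skewMul_X_right, natDegree_sub_eq_left_of_natDegree_lt] <;>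
    rw [natDegree_mul_X hq]
  omega

lemma opev_skewMul (p g : F[X]) (a b : F) :
    opev σ (skewMul σ p g) a b = opev σ p a (opev σ g a b) := by
  induction p using Polynomial.induction_on' with
  | add p q hp hq => rw [skewMul_add_left, opev_add, opev_add, hp, hq]
  | monomial u c =>
    rw [skewMul_monomial_left, opev_monomial]
    induction g using Polynomial.induction_on' with
    | add g g' hg hg' =>
      rw [Polynomial.map_add, mul_add, opev_add, hg, hg', opev_add, Dit_add, mul_add]
    | monomial m x =>
      rw [map_monomial, C_mul_X_pow_eq_monomial, monomial_mul_monomial, opev_monomial,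
        opev_monomial, Dit_add_index, Dit_mul, mul_assoc]
      rfl

lemma skewMul_monomial_X_sub_C (n : ℕ) (c α : F) :
    skewMul σ (monomial n c) (X - C α) = monomial (n + 1) c - monomial n (c * (σ ^ n) α) := by
  rw [skewMul_monomial_left, Polynomial.map_sub, map_X, map_C, ← C_mul_X_pow_eq_monomial,
    ← C_mul_X_pow_eq_monomial, C_mul, pow_succ]
  simp only [RingEquiv.toRingHom_eq_coe, RingHom.coe_coe]
  ring

lemma exists_eq_skewMul_X_sub_C_add_C (α : F) (p : F[X]) :
    ∃ q ρ, p = skewMul σ q (X - C α) + C ρ := by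
  induction p using Polynomial.induction_on' with
  | add p p' hp hp' =>
    obtain ⟨q, ρ, rfl⟩ := hp
    obtain ⟨q', ρ', rfl⟩ := hp'
    exact ⟨q + q', ρ + ρ', by rw [skewMul_add_left, C_add]; ring⟩
  | monomial n c =>
    induction n generalizing c with
    | zero => exact ⟨0, c, by rw [skewMul_zero_left, zero_add, monomial_zero_left]⟩
    | succ n ih =>
      obtain ⟨q, ρ, hq⟩ := ih (c * (σ ^ n) α)
      refine ⟨monomial n c + q, ρ, ?_⟩
      rw [skewMul_add_left, skewMul_monomial_X_sub_C, add_assoc, ← hq, sub_add_cancel]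

lemma exists_eq_skewMul_X_sub_C_of_opev_eq_zero {p : F[X]} {a b : F} (hb : b ≠ 0)
    (hroot : opev σ p a b = 0) : ∃ q, p = skewMul σ q (X - C (σ b * a * b⁻¹)) := by
  obtain ⟨q, ρ, rfl⟩ := exists_eq_skewMul_X_sub_C_add_C σ (σ b * a * b⁻¹) p
  have hρ : ρ = 0 := by
    rwa [opev_add, opev_skewMul, opev_X_sub_C, inv_mul_cancel_right₀ hb, sub_self,
      ← opevLinear_apply, map_zero, zero_add, opev_C, mul_eq_zero, or_iff_left hb] at hroot
  exact ⟨q, by rw [hρ, C_0, add_zero]⟩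

end SkewProduct

section RootSpace

variable {F : Type*} [Field F] (σ : F ≃+* F)

noncomputable def rootSpace (p : F[X]) (a : F) : Submodule (fixedSubfield σ) F :=
  LinearMap.ker (opevLinear σ p a)

lemma mem_rootSpace {p : F[X]} {a b : F} : b ∈ rootSpace σ p a ↔ opev σ p a b = 0 := Iff.rfl

lemma rootSpace_skewMul (q g : F[X]) (a : F) :
    rootSpace σ (skewMul σ q g) a = (rootSpace σ q a).comap (opevLinear σ g a) := by
  ext b
  simp only [Submodule.mem_comap, mem_rootSpace, opevLinear_apply, opev_skewMul]

variable {σ}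

lemma conj_eq_of_mem_rootSpace_X_sub_C {a a' b c : F} (hb : b ≠ 0) (hc : c ≠ 0)
    (h : c ∈ rootSpace σ (X - C (σ b * a' * b⁻¹)) a) :
    σ (c⁻¹ * b) * a' * (c⁻¹ * b)⁻¹ = a := by
  rw [mem_rootSpace, opev_X_sub_C, sub_eq_zero] at h
  have hσc : σ c ≠ 0 := (map_ne_zero σ).mpr hc
  have h' : σ c * a * b = σ b * a' * c := by rw [h]; field_simp
  rw [mul_inv_eq_iff_eq_mul₀ (by simp [hb, hc]), map_mul, map_inv₀]
  field_simp
  linear_combination -h'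

lemma rootSpace_X_sub_C_eq_bot {a a' b : F} (hb : b ≠ 0)
    (hconj : ¬∃ d : F, d ≠ 0 ∧ σ d * a' * d⁻¹ = a) :
    rootSpace σ (X - C (σ b * a' * b⁻¹)) a = ⊥ := by
  refine (Submodule.eq_bot_iff _).mpr fun c hc => ?_
  by_contra hc0
  exact hconj ⟨c⁻¹ * b, by simp [hb, hc0], conj_eq_of_mem_rootSpace_X_sub_C hb hc0 hc⟩

lemma rootSpace_X_sub_C_le_span {a b : F} (ha : a ≠ 0) (hb : b ≠ 0) :
    rootSpace σ (X - C (σ b * a * b⁻¹)) a ≤ (fixedSubfield σ) ∙ b := by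
  intro c hc
  rcases eq_or_ne c 0 with rfl | hc0
  · exact zero_mem _
  have hd : c⁻¹ * b ≠ 0 := by simp [hb, hc0]
  have hfix : σ (b⁻¹ * c) = b⁻¹ * c := by
    have h := conj_eq_of_mem_rootSpace_X_sub_C hb hc0 hc
    rw [mul_inv_eq_iff_eq_mul₀ hd, mul_comm a, mul_left_inj' ha] at h
    rw [← inv_inj, ← map_inv₀, mul_inv_rev, inv_inv, h]
  refine Submodule.mem_span_singleton.mpr ⟨⟨b⁻¹ * c, hfix⟩, ?_⟩
  rw [Subfield.smul_def, smul_eq_mul]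
  field_simp

end RootSpace

lemma Submodule.finrank_comap_le {K V W : Type*} [DivisionRing K] [AddCommGroup V] [Module K V]
    [AddCommGroup W] [Module K W] [FiniteDimensional K V] [FiniteDimensional K W]
    (f : V →ₗ[K] W) (p : Submodule K W) :
    Module.finrank K (p.comap f) ≤ Module.finrank K p + Module.finrank K (LinearMap.ker f) := by
  have h := LinearMap.lift_rank_comap_le (f := f) p
  rw [← Submodule.finrank_eq_rank, ← Submodule.finrank_eq_rank, ← Submodule.finrank_eq_rank] at h
  simp only [Cardinal.lift_natCast] at h
  exact_mod_cast h

open Module in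
theorem sum_finrank_rootSpace_le_natDegree {F : Type*} [Field F] {σ : F ≃+* F}
    [FiniteDimensional (fixedSubfield σ) F] {ι : Type*} [Fintype ι] {a : ι → F}
    (ha : ∀ i, a i ≠ 0) (hconj : ∀ i i', i ≠ i' → ¬∃ c : F, c ≠ 0 ∧ σ c * a i * c⁻¹ = a i')
    {p : F[X]} (hp : p ≠ 0) :
    ∑ i, finrank (fixedSubfield σ) (rootSpace σ p (a i)) ≤ p.natDegree := by
  classical
  induction hn : p.natDegree using Nat.strong_induction_on generalizing p with
  | _ n ih =>
  by_cases hall : ∀ i, rootSpace σ p (a i) = ⊥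
  · rw [Finset.sum_eq_zero fun i _ => by rw [hall i, finrank_bot]]
    exact Nat.zero_le _
  obtain ⟨i₀, hi₀⟩ := not_forall.mp hall
  obtain ⟨b, hb, hb0⟩ := Submodule.exists_mem_ne_zero_of_ne_bot hi₀
  obtain ⟨q, rfl⟩ := exists_eq_skewMul_X_sub_C_of_opev_eq_zero σ hb0 hb
  have hq : q ≠ 0 := by rintro rfl; exact hp (skewMul_zero_left σ _)
  set g : F[X] := X - C (σ b * a i₀ * b⁻¹)
  have hker : ∀ i, finrank (fixedSubfield σ) (rootSpace σ g (a i)) ≤ if i = i₀ then 1 else 0 := by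
    intro i
    split_ifs with h
    · subst h
      refine (Submodule.finrank_mono (rootSpace_X_sub_C_le_span (ha i) hb0)).trans ?_
      simpa using finrank_span_le_card ({b} : Set F) (R := fixedSubfield σ)
    · rw [rootSpace_X_sub_C_eq_bot hb0 (hconj i₀ i (Ne.symm h)), finrank_bot]
  calc ∑ i, finrank (fixedSubfield σ) (rootSpace σ (skewMul σ q g) (a i))
      ≤ ∑ i, (finrank (fixedSubfield σ) (rootSpace σ q (a i)) + if i = i₀ then 1 else 0) := by
        refine Finset.sum_le_sum fun i _ => ?_
        rw [rootSpace_skewMul]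
        exact (Submodule.finrank_comap_le _ _).trans (Nat.add_le_add_left (hker i) _)
    _ = ∑ i, finrank (fixedSubfield σ) (rootSpace σ q (a i)) + 1 := by
        simp [Finset.sum_add_distrib]
    _ ≤ q.natDegree + 1 := by
        gcongr
        exact ih _ (by rw [← hn, natDegree_skewMul_X_sub_C σ hq]; omega) hq rfl
    _ = n := by rw [← hn, natDegree_skewMul_X_sub_C σ hq]

lemma linearIndependent_sum_smul {R M ι κ ν : Type*} [CommRing R] [AddCommGroup M] [Module R M]
    [Fintype ι] [Fintype κ] [Fintype ν] {v : ι × ν → M} (hv : LinearIndependent R v)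
    {w : κ → ι → R} (hw : LinearIndependent R w) :
    LinearIndependent R fun p : κ × ν => ∑ j, w p.1 j • v (j, p.2) := by
  rw [Fintype.linearIndependent_iff] at hv hw ⊢
  intro c hc
  have hcoeff : ∑ q : ι × ν, (∑ k, c (k, q.2) * w k q.1) • v q = 0 := by
    rw [← hc]
    simp only [Fintype.sum_prod_type, Finset.smul_sum, smul_smul, Finset.sum_smul]
    rw [Finset.sum_comm]
    exact (Finset.sum_congr rfl fun _ _ => Finset.sum_comm).trans Finset.sum_comm
  rintro ⟨k, l⟩
  refine hw (fun k => c (k, l)) (funext fun j => ?_) k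
  simpa using hv _ hcoeff (j, l)

lemma LinearIndependent.mul_add_of_le {R M : Type*} [Ring R] [AddCommGroup M] [Module R M]
    {v : ℕ → M} {N h W : ℕ} (hv : LinearIndependent R fun t : Fin (N * h) => v t) (hW : W ≤ h) :
    LinearIndependent R fun q : Fin N × Fin W => v (q.1 * h + q.2) := by
  have hinj : Function.Injective fun q : Fin N × Fin W =>
      finProdFinEquiv (q.1, Fin.castLE hW q.2) :=
    finProdFinEquiv.injective.comp fun q q' hq => by
      simp only [Prod.mk.injEq, Fin.castLE_inj] at hq
      exact Prod.ext hq.1 hq.2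
  convert hv.comp _ hinj using 2 with q
  simp [finProdFinEquiv, mul_comm, add_comm]

open IntermediateField in
lemma linearIndependent_pow_of_adjoin_eq_top {K L : Type*} [Field K] [Field L] [Algebra K L]
    [FiniteDimensional K L] {γ : L} (hγ : K⟮γ⟯ = ⊤) :
    LinearIndependent K fun t : Fin (Module.finrank K L) => γ ^ (t : ℕ) := by
  have hdeg : Module.finrank K L = (minpoly K γ).natDegree := by
    rw [← adjoin.finrank (IsIntegral.of_finite K γ), hγ, finrank_top']
  rw [hdeg]
  exact linearIndependent_pow γ

open IntermediateField in
lemma adjoin_simple_eq_top_of_forall_eq_pow {K L : Type*} [Field K] [Field L] [Algebra K L]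
    {γ : L} (hγ : ∀ x : L, x ≠ 0 → ∃ j : ℕ, x = γ ^ j) : K⟮γ⟯ = ⊤ := by
  refine eq_top_iff.mpr fun x _ => ?_
  rcases eq_or_ne x 0 with rfl | hx
  · exact zero_mem _
  obtain ⟨j, rfl⟩ := hγ x hx
  exact pow_mem (mem_adjoin_simple_self K γ) j

lemma exists_linearIndependent_column_relations {F : Type*} [Field F] (σ : F ≃+* F) {h N : ℕ}
    (M : Matrix (Fin h) (Fin N) F) :
    ∃ w : Fin (N - colRank σ M) → Fin N → fixedSubfield σ,
      LinearIndependent (fixedSubfield σ) w ∧ ∀ k r, ∑ j, w k j • M r j = 0 := by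
  set φ := Fintype.linearCombination (fixedSubfield σ) fun j r => M r j
  have hker : Module.finrank (fixedSubfield σ) (LinearMap.ker φ) = N - colRank σ M := by
    have := φ.finrank_range_add_finrank_ker
    rw [Fintype.range_linearCombination, Module.finrank_fin_fun] at this
    rw [colRank]
    omega
  obtain b := Module.finBasisOfFinrankEq _ _ hker
  have hb : LinearIndependent (fixedSubfield σ) fun k => (b k : Fin N → fixedSubfield σ) :=
    (b.linearIndependent.map' (LinearMap.ker φ).subtype (LinearMap.ker φ).ker_subtype :)
  refine ⟨fun k => b k, hb, fun k r => ?_⟩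
  have hk : φ (b k) = 0 := LinearMap.mem_ker.mp (b k).2
  rw [Fintype.linearCombination_apply] at hk
  simpa using congr_fun hk r

section Interpolation

variable {F : Type*} [Field F] (σ : F ≃+* F) {s : ℕ}

noncomputable def interpolationPoly (Q : Fin (s + 1) → F[X]) (f : F[X]) (γ : F) : F[X] :=
  Q 0 + ∑ r : Fin s, skewMul σ (Q r.succ) (skewMul σ f (C (γ ^ (r : ℕ))))

lemma coeff_interpolationPoly (Q : Fin (s + 1) → F[X]) (f : F[X]) (γ : F) (n : ℕ) :
    (interpolationPoly σ Q f γ).coeff n = (Q 0).coeff n +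
      ∑ r : Fin s, ∑ u ∈ Finset.range (n + 1),
        (Q r.succ).coeff u * (⇑σ)^[u] (f.coeff (n - u) * (⇑σ)^[n - u] (γ ^ (r : ℕ))) := by
  simp only [interpolationPoly, coeff_add, finsetSum_coeff, coeff_skewMul σ (Q _),
    coeff_skewMul_C, RingAut.coe_pow]

lemma opev_interpolationPoly (Q : Fin (s + 1) → F[X]) (f : F[X]) (γ a b : F) :
    opev σ (interpolationPoly σ Q f γ) a b =
      opev σ (Q 0) a b + ∑ r : Fin s, opev σ (Q r.succ) a (opev σ f a (γ ^ (r : ℕ) * b)) := by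
  simp only [interpolationPoly, opev_add, opev_finset_sum, opev_skewMul, opev_C]

lemma natDegree_interpolationPoly_lt {Q : Fin (s + 1) → F[X]} {f : F[X]} (γ : F) {k D : ℕ}
    (hk : 1 ≤ k) (hkD : k ≤ D) (hf : f.degree < k) (hQ₀ : (Q 0).degree < D)
    (hQ : ∀ r : Fin s, (Q r.succ).degree < (D - k + 1 : ℕ)) :
    (interpolationPoly σ Q f γ).natDegree < D := by
  have natDegree_lt {p : F[X]} {n : ℕ} (hn : 0 < n) (hp : p.degree < n) : p.natDegree < n := by
    rcases eq_or_ne p 0 with rfl | hp0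
    · simpa
    · exact (natDegree_lt_iff_degree_lt hp0).mpr hp
  have hfk := natDegree_lt hk hf
  have hterm (r : Fin s) :
      (skewMul σ (Q r.succ) (skewMul σ f (C (γ ^ (r : ℕ))))).natDegree ≤ D - 1 := by
    have hQr := natDegree_lt (by omega) (hQ r)
    have hfC : (skewMul σ f (C (γ ^ (r : ℕ)))).natDegree ≤ f.natDegree := by
      simpa using natDegree_skewMul_le σ f (C (γ ^ (r : ℕ)))
    have := natDegree_skewMul_le σ (Q r.succ) (skewMul σ f (C (γ ^ (r : ℕ))))
    omega
  have hsum := natDegree_sum_le_of_forall_le Finset.univ _ fun r _ => hterm r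
  exact (natDegree_add_le _ _).trans_lt (max_lt (natDegree_lt (by omega) hQ₀) (by omega))

end Interpolation

open Module in
theorem le_finrank_rootSpace_interpolationPoly {F : Type*} [Field F] {σ : F ≃+* F}
    [FiniteDimensional (fixedSubfield σ) F] {h N s : ℕ} (hs : 1 ≤ s) (hsh : s ≤ h) {γ a : F}
    (hγ : LinearIndependent (fixedSubfield σ) fun t : Fin (N * h) => γ ^ (t : ℕ))
    {f : F[X]} {E R : Matrix (Fin h) (Fin N) F}
    (hR : ∀ r c, R r c = opev σ f a (γ ^ (c.1 * h + r.1)) + E r c)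
    {Q : Fin (s + 1) → F[X]}
    (hvanish : ∀ (j : Fin N) (l : Fin (h - s + 1)),
      opev σ (Q 0) a (γ ^ (j.1 * h + l.1)) +
        ∑ r : Fin s, opev σ (Q r.succ) a (R ⟨l.1 + r.1, by omega⟩ j) = 0) :
    (N - colRank σ E) * (h - s + 1) ≤
      finrank (fixedSubfield σ) (rootSpace σ (interpolationPoly σ Q f γ) a) := by
  obtain ⟨w, hw, hwE⟩ := exists_linearIndependent_column_relations σ E
  have hpow := hγ.mul_add_of_le (v := (γ ^ ·)) (show h - s + 1 ≤ h by omega)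
  set root : Fin (N - colRank σ E) × Fin (h - s + 1) → F :=
    fun p => ∑ j, w p.1 j • γ ^ (j.1 * h + p.2.1)
  have hroot (k : Fin (N - colRank σ E)) (l : Fin (h - s + 1)) :
      root (k, l) ∈ rootSpace σ (interpolationPoly σ Q f γ) a := by
    have hfR (r : Fin s) :
        opev σ f a (γ ^ (r : ℕ) * root (k, l)) = ∑ j, w k j • R ⟨l.1 + r.1, by omega⟩ j := by
      simp only [hR, smul_add, Finset.sum_add_distrib, hwE, add_zero, root, Finset.mul_sum,
        mul_smul_comm, ← opevLinear_apply, map_sum, map_smul, ← pow_add]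
      exact Finset.sum_congr rfl fun j _ => by ring_nf
    rw [mem_rootSpace, opev_interpolationPoly]
    simp only [hfR, root, ← opevLinear_apply, map_sum, map_smul]
    rw [Finset.sum_comm, ← Finset.sum_add_distrib]
    simp only [← Finset.smul_sum, ← smul_add, opevLinear_apply, hvanish, smul_zero,
      Finset.sum_const_zero]
  calc (N - colRank σ E) * (h - s + 1)
      = finrank (fixedSubfield σ) (Submodule.span (fixedSubfield σ) (Set.range root)) := by
        rw [finrank_span_eq_card (linearIndependent_sum_smul hpow hw)]
        simp
    _ ≤ _ := Submodule.finrank_mono <| Submodule.span_le.mpr <| Set.range_subset_iff.mpr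
        fun p => hroot p.1 p.2

/-- If `Q` is a nonzero solution of the FLRS interpolation problem and
`D ≤ Σ_i (N_i − t_i)(h_i − s + 1)`, then the univariate skew polynomial
`P(x) = Q_0(x) + Σ_{r=1}^s Q_r(x) f(x) γ^{r−1}` is the zero polynomial. -/
theorem stmt_10 (F : Type*) [Field F] [Fintype F] (σ : F ≃+* F)
    (ℓ s k D : ℕ) (hs : 1 ≤ s) (hk : 1 ≤ k) (hkD : k ≤ D)
    (hv Nv tv : Fin ℓ → ℕ) (hsh : ∀ i, s ≤ hv i)
    (hnm : ∀ i, hv i * Nv i ≤ Module.finrank (fixedSubfield σ) F)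
    (γ : F) (hprim : ∀ x : F, x ≠ 0 → ∃ j : ℕ, x = γ ^ j)
    (a : Fin ℓ → F) (ha0 : ∀ i, a i ≠ 0)
    (hconj : ∀ i i' : Fin ℓ, i ≠ i' →
      ¬ ∃ c : F, c ≠ 0 ∧ σ c * a i * c⁻¹ = a i')
    -- message polynomial and codeword-plus-error received word
    (f : Polynomial F) (hf : f.degree < (k : ℕ))
    (E : ∀ i : Fin ℓ, Matrix (Fin (hv i)) (Fin (Nv i)) F)
    (htv : ∀ i, colRank σ (E i) = tv i)
    (R : ∀ i : Fin ℓ, Matrix (Fin (hv i)) (Fin (Nv i)) F)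
    (hR : ∀ i r c, R i r c = opev σ f (a i) (γ ^ (c.1 * hv i + r.1)) + E i r c)
    -- a nonzero solution `Q = (Q_0, ..., Q_s)` of the interpolation problem
    (Q : Fin (s + 1) → Polynomial F)
    (hdeg0 : (Q 0).degree < (D : ℕ))
    (hdegr : ∀ r : Fin s, (Q r.succ).degree < ((D - k + 1 : ℕ) : ℕ))
    (hvanish : ∀ (i : Fin ℓ) (j : Fin (Nv i)) (l : Fin (hv i - s + 1)),
      opev σ (Q 0) (a i) (γ ^ (j.1 * hv i + l.1)) +
        ∑ r : Fin s, opev σ (Q r.succ) (a i)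
          (R i ⟨l.1 + r.1, by have h1 := l.2; have h2 := r.2; have h3 := hsh i; omega⟩ j)
        = 0)
    -- decoding-radius condition on the degree bound
    (hDle : D ≤ ∑ i, (Nv i - tv i) * (hv i - s + 1)) :
    -- the skew polynomial `P = Q_0 + Σ_r Q_{r+1}·f·γ^r` has all coefficients zero
    ∀ n : ℕ, (Q 0).coeff n +
      ∑ r : Fin s, ∑ u ∈ Finset.range (n + 1),
        (Q r.succ).coeff u * (⇑σ)^[u] (f.coeff (n - u) * (⇑σ)^[n - u] (γ ^ r.1)) = 0 := by
  suffices hP : interpolationPoly σ Q f γ = 0 by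
    intro n
    rw [← coeff_interpolationPoly, hP, coeff_zero]
  by_contra hP
  have hpow := linearIndependent_pow_of_adjoin_eq_top (K := fixedSubfield σ)
    (adjoin_simple_eq_top_of_forall_eq_pow hprim)
  have hγ (i : Fin ℓ) :
      LinearIndependent (fixedSubfield σ) fun t : Fin (Nv i * hv i) => γ ^ (t : ℕ) :=
    hpow.comp _ (Fin.castLE_injective ((mul_comm _ _).trans_le (hnm i)))
  have hblocks (i : Fin ℓ) : (Nv i - tv i) * (hv i - s + 1) ≤
      Module.finrank (fixedSubfield σ) (rootSpace σ (interpolationPoly σ Q f γ) (a i)) := by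
    rw [← htv i]
    exact le_finrank_rootSpace_interpolationPoly hs (hsh i) (hγ i) (hR i) (hvanish i)
  have hcount := sum_finrank_rootSpace_le_natDegree ha0 hconj hP
  have hdeg := natDegree_interpolationPoly_lt σ γ hk hkD hf hdeg0 hdegr
  have hsum := Finset.sum_le_sum fun i (_ : i ∈ Finset.univ) => hblocks i
  omega
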